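/- arXiv:1710.03527 — 3 statements merged into one kernel-verified Lean document; each statement's English description precedes it below -/
import Mathlib

section
/- Let d ≥ 1 and let u : ℝ × ℝ → ℝ^d be a smooth (C^∞) function satisfying the vmKdV equation u_t + (3/2)‖u‖² u_x + u_xxx = 0 at every point (x,t). Then the pointwise conservation law ∂_t( (1/2)‖u_x‖² − (1/8)‖u‖⁴ ) = ∂_x( (1/8)‖u‖⁶ − ‖u‖²‖u_x‖² − (1/2)(u·u_x)² − u_x·u_xxx + (1/2)‖u_xx‖² + (1/2)‖u‖²(u·u_xx) ) holds at every point (x,t). -/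
/-!
Write `u₀ = u, u₁ = u_x, …, u₄ = u_xxxx` at the point `(x, t)`. By the chain rule the time
derivative of the density is `⟪u₁, u_xt⟫ - ½‖u₀‖²⟪u₀, u_t⟫` and the space derivative of the flux is
a polynomial in the inner products of `u₀, …, u₄`. The equation gives `u_t`, and, after exchanging
`∂_t ∂_x = ∂_x ∂_t` (symmetry of the second derivative of a `C²` map), its `x`-derivative gives
`u_xt = -(3/2)‖u₀‖² u₂ - 3⟪u₀, u₁⟫ u₁ - u₄`. Substituting both, the two sides agree as polynomials in
those inner products.
-/

open Real MeasureTheory intervalIntegral InnerProductSpace ContDiff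

/-- Partial derivative in the first (space) variable. -/
noncomputable def pdx {E : Type*} [NormedAddCommGroup E] [NormedSpace ℝ E]
    (u : ℝ → ℝ → E) : ℝ → ℝ → E := fun x t => deriv (fun y => u y t) x

/-- Partial derivative in the second (time) variable. -/
noncomputable def pdt {E : Type*} [NormedAddCommGroup E] [NormedSpace ℝ E]
    (u : ℝ → ℝ → E) : ℝ → ℝ → E := fun x t => deriv (fun s => u x s) t

/-- The vectorial modified KdV equation `u_t + (3/2)‖u‖² u_x + u_xxx = 0`. -/
def IsVmKdV {d : ℕ} (u : ℝ → ℝ → EuclideanSpace ℝ (Fin d)) : Prop :=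
  ∀ x t : ℝ,
    pdt u x t + ((3 : ℝ) / 2 * ‖u x t‖ ^ 2) • pdx u x t + pdx (pdx (pdx u)) x t = 0

open Function

section PartialDerivatives

variable {E : Type*} [NormedAddCommGroup E] [NormedSpace ℝ E] {v : ℝ → ℝ → E} {x t : ℝ}

theorem hasDerivAt_fderiv_apply_fst (hv : DifferentiableAt ℝ (uncurry v) (x, t)) :
    HasDerivAt (fun y => v y t) (fderiv ℝ (uncurry v) (x, t) (1, 0)) x :=
  hv.hasFDerivAt.comp_hasDerivAt (f := fun y => (y, t)) x
    ((hasDerivAt_id x).prodMk (hasDerivAt_const x t))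

theorem hasDerivAt_fderiv_apply_snd (hv : DifferentiableAt ℝ (uncurry v) (x, t)) :
    HasDerivAt (fun s => v x s) (fderiv ℝ (uncurry v) (x, t) (0, 1)) t :=
  hv.hasFDerivAt.comp_hasDerivAt (f := fun s => (x, s)) t
    ((hasDerivAt_const t x).prodMk (hasDerivAt_id t))

theorem pdx_eq_fderiv_apply (hv : DifferentiableAt ℝ (uncurry v) (x, t)) :
    pdx v x t = fderiv ℝ (uncurry v) (x, t) (1, 0) :=
  (hasDerivAt_fderiv_apply_fst hv).deriv

theorem pdt_eq_fderiv_apply (hv : DifferentiableAt ℝ (uncurry v) (x, t)) :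
    pdt v x t = fderiv ℝ (uncurry v) (x, t) (0, 1) :=
  (hasDerivAt_fderiv_apply_snd hv).deriv

theorem hasDerivAt_pdx (hv : DifferentiableAt ℝ (uncurry v) (x, t)) :
    HasDerivAt (fun y => v y t) (pdx v x t) x :=
  pdx_eq_fderiv_apply hv ▸ hasDerivAt_fderiv_apply_fst hv

theorem hasDerivAt_pdt (hv : DifferentiableAt ℝ (uncurry v) (x, t)) :
    HasDerivAt (fun s => v x s) (pdt v x t) t :=
  pdt_eq_fderiv_apply hv ▸ hasDerivAt_fderiv_apply_snd hv

theorem uncurry_pdx_eq (hv : Differentiable ℝ (uncurry v)) :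
    uncurry (pdx v) = fun p => fderiv ℝ (uncurry v) p (1, 0) := by
  ext ⟨x, t⟩
  exact pdx_eq_fderiv_apply (hv _)

theorem uncurry_pdt_eq (hv : Differentiable ℝ (uncurry v)) :
    uncurry (pdt v) = fun p => fderiv ℝ (uncurry v) p (0, 1) := by
  ext ⟨x, t⟩
  exact pdt_eq_fderiv_apply (hv _)

theorem ContDiff.uncurry_pdx {m n : WithTop ℕ∞} (hv : ContDiff ℝ n (uncurry v))
    (hmn : m + 1 ≤ n) :
    ContDiff ℝ m (uncurry (pdx v)) := by
  rw [uncurry_pdx_eq (hv.differentiable (by rintro rfl; simp at hmn))]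
  exact (hv.fderiv_right hmn).clm_apply contDiff_const

theorem pdt_pdx_comm (hv : ContDiff ℝ 2 (uncurry v)) (x t : ℝ) :
    pdt (pdx v) x t = pdx (pdt v) x t := by
  have hdiff : Differentiable ℝ (uncurry v) := hv.differentiable (by simp)
  have hd2 : Differentiable ℝ (fderiv ℝ (uncurry v)) :=
    (hv.fderiv_right (m := 1) le_rfl).differentiable one_ne_zero
  have hfderiv_apply : ∀ e w : ℝ × ℝ, fderiv ℝ (fun p => fderiv ℝ (uncurry v) p e) (x, t) w
      = fderiv ℝ (fderiv ℝ (uncurry v)) (x, t) w e := by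
    intro e w
    rw [fderiv_clm_apply (hd2 _) (differentiableAt_const e)]
    simp
  have hx : Differentiable ℝ (uncurry (pdx v)) := by
    rw [uncurry_pdx_eq hdiff]; exact fun p => (hd2 p).clm_apply (differentiableAt_const _)
  have ht : Differentiable ℝ (uncurry (pdt v)) := by
    rw [uncurry_pdt_eq hdiff]; exact fun p => (hd2 p).clm_apply (differentiableAt_const _)
  rw [pdt_eq_fderiv_apply (hx _), pdx_eq_fderiv_apply (ht _), uncurry_pdx_eq hdiff,
    uncurry_pdt_eq hdiff, hfderiv_apply, hfderiv_apply]
  exact ((hv.contDiffAt).isSymmSndFDerivAt (by simp)) _ _ |>.symm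

end PartialDerivatives

section EnergyLaw

variable {F : Type*} [NormedAddCommGroup F] [InnerProductSpace ℝ F]

noncomputable def vmkdvEnergyDensity (u₀ u₁ : F) : ℝ :=
  1 / 2 * ‖u₁‖ ^ 2 - 1 / 8 * ‖u₀‖ ^ 4

noncomputable def vmkdvEnergyFlux (u₀ u₁ u₂ u₃ : F) : ℝ :=
  1 / 8 * ‖u₀‖ ^ 6 - ‖u₀‖ ^ 2 * ‖u₁‖ ^ 2 - 1 / 2 * ⟪u₀, u₁⟫_ℝ ^ 2 - ⟪u₁, u₃⟫_ℝ
    + 1 / 2 * ‖u₂‖ ^ 2 + 1 / 2 * ‖u₀‖ ^ 2 * ⟪u₀, u₂⟫_ℝ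

theorem HasDerivAt.vmkdvEnergyDensity {f₀ f₁ : ℝ → F} {f₀' f₁' : F} {t : ℝ}
    (h₀ : HasDerivAt f₀ f₀' t) (h₁ : HasDerivAt f₁ f₁' t) :
    HasDerivAt (fun s => vmkdvEnergyDensity (f₀ s) (f₁ s))
      (⟪f₁ t, f₁'⟫_ℝ - 1 / 2 * ‖f₀ t‖ ^ 2 * ⟪f₀ t, f₀'⟫_ℝ) t := by
  have h := (h₁.norm_sq.const_mul (1 / 2)).sub ((h₀.norm_sq.fun_pow 2).const_mul (1 / 8))
  refine (h.congr_deriv (by push_cast; ring)).congr_of_eventuallyEq (.of_forall fun s => ?_)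
  simp only [_root_.vmkdvEnergyDensity, Pi.sub_apply, ← pow_mul]

theorem HasDerivAt.vmkdvEnergyFlux {f₀ f₁ f₂ f₃ : ℝ → F} {f₄ : F} {x : ℝ}
    (h₀ : HasDerivAt f₀ (f₁ x) x) (h₁ : HasDerivAt f₁ (f₂ x) x)
    (h₂ : HasDerivAt f₂ (f₃ x) x) (h₃ : HasDerivAt f₃ f₄ x) :
    HasDerivAt (fun y => vmkdvEnergyFlux (f₀ y) (f₁ y) (f₂ y) (f₃ y))
      (3 / 4 * ‖f₀ x‖ ^ 4 * ⟪f₀ x, f₁ x⟫_ℝ - 3 * ⟪f₀ x, f₁ x⟫_ℝ * ‖f₁ x‖ ^ 2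
        - 3 / 2 * ‖f₀ x‖ ^ 2 * ⟪f₁ x, f₂ x⟫_ℝ - ⟪f₁ x, f₄⟫_ℝ
        + 1 / 2 * ‖f₀ x‖ ^ 2 * ⟪f₀ x, f₃ x⟫_ℝ) x := by
  have hn₀ := h₀.norm_sq
  have h := ((((((hn₀.fun_pow 3).const_mul (1 / 8)).sub (hn₀.fun_mul h₁.norm_sq)).sub
    (((h₀.inner ℝ h₁).fun_pow 2).const_mul (1 / 2))).sub (h₁.inner ℝ h₃)).add
    (h₂.norm_sq.const_mul (1 / 2))).add ((hn₀.fun_mul (h₀.inner ℝ h₂)).const_mul (1 / 2))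
  refine (h.congr_deriv ?_).congr_of_eventuallyEq (.of_forall fun y => ?_)
  · simp only [real_inner_comm (f₁ x), real_inner_self_eq_norm_sq]
    push_cast
    ring
  · simp only [_root_.vmkdvEnergyFlux, Pi.add_apply, Pi.sub_apply]
    ring

end EnergyLaw

section VmKdV

variable {d : ℕ} {u : ℝ → ℝ → EuclideanSpace ℝ (Fin d)}

theorem IsVmKdV.pdt_eq (hsol : IsVmKdV u) (x t : ℝ) :
    pdt u x t = -((3 / 2 * ‖u x t‖ ^ 2) • pdx u x t) - pdx (pdx (pdx u)) x t := by
  linear_combination (norm := module) hsol x t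

theorem IsVmKdV.pdt_pdx_eq (hsol : IsVmKdV u) (hu : ContDiff ℝ 4 (uncurry u)) (x t : ℝ) :
    pdt (pdx u) x t = -((3 / 2 * ‖u x t‖ ^ 2) • pdx (pdx u) x t
      + (3 * ⟪u x t, pdx u x t⟫_ℝ) • pdx u x t) - pdx (pdx (pdx (pdx u))) x t := by
  have h₁ : ContDiff ℝ 3 (uncurry (pdx u)) := hu.uncurry_pdx (by norm_num)
  have h₂ : ContDiff ℝ 2 (uncurry (pdx (pdx u))) := h₁.uncurry_pdx (by norm_num)
  have h₃ : ContDiff ℝ 1 (uncurry (pdx (pdx (pdx u)))) := h₂.uncurry_pdx (by norm_num)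
  have hD := ((((hasDerivAt_pdx (hu.differentiable (by simp) (x, t))).norm_sq.const_mul
    (3 / 2)).smul (hasDerivAt_pdx (h₁.differentiable (by simp) (x, t)))).neg).sub
    (hasDerivAt_pdx (h₃.differentiable (by simp) (x, t)))
  rw [pdt_pdx_comm (hu.of_le (by norm_num)), pdx, funext fun y => hsol.pdt_eq y t]
  exact hD.deriv.trans (by module)

end VmKdV

theorem vmkdv_energy_conservation_law_general (d : ℕ)
    (u : ℝ → ℝ → EuclideanSpace ℝ (Fin d))
    (hu : ContDiff ℝ ∞ (Function.uncurry u))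
    (hsol : IsVmKdV u) :
    ∀ x t : ℝ,
      deriv (fun s => (1 : ℝ) / 2 * ‖pdx u x s‖ ^ 2 - (1 : ℝ) / 8 * ‖u x s‖ ^ 4) t
        = deriv (fun y =>
            (1 : ℝ) / 8 * ‖u y t‖ ^ 6
              - ‖u y t‖ ^ 2 * ‖pdx u y t‖ ^ 2
              - (1 : ℝ) / 2 * ⟪u y t, pdx u y t⟫_ℝ ^ 2
              - ⟪pdx u y t, pdx (pdx (pdx u)) y t⟫_ℝ
              + (1 : ℝ) / 2 * ‖pdx (pdx u) y t‖ ^ 2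
              + (1 : ℝ) / 2 * ‖u y t‖ ^ 2 * ⟪u y t, pdx (pdx u) y t⟫_ℝ) x := by
  intro x t
  have h₄ : ContDiff ℝ 4 (uncurry u) := hu.of_le (WithTop.coe_le_coe.2 le_top)
  have h₁ : ContDiff ℝ 3 (uncurry (pdx u)) := h₄.uncurry_pdx (by norm_num)
  have h₂ : ContDiff ℝ 2 (uncurry (pdx (pdx u))) := h₁.uncurry_pdx (by norm_num)
  have h₃ : ContDiff ℝ 1 (uncurry (pdx (pdx (pdx u)))) := h₂.uncurry_pdx (by norm_num)
  have hdensity := (HasDerivAt.vmkdvEnergyDensity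
    (hasDerivAt_pdt (h₄.differentiable (by simp) (x, t)))
    (hasDerivAt_pdt (h₁.differentiable (by simp) (x, t)))).deriv
  have hflux := (HasDerivAt.vmkdvEnergyFlux (f₀ := fun y => u y t) (f₁ := fun y => pdx u y t)
    (f₂ := fun y => pdx (pdx u) y t) (f₃ := fun y => pdx (pdx (pdx u)) y t)
    (hasDerivAt_pdx (h₄.differentiable (by simp) (x, t)))
    (hasDerivAt_pdx (h₁.differentiable (by simp) (x, t)))
    (hasDerivAt_pdx (h₂.differentiable (by simp) (x, t)))
    (hasDerivAt_pdx (h₃.differentiable (by simp) (x, t)))).deriv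
  refine hdensity.trans (Eq.trans ?_ hflux.symm)
  rw [hsol.pdt_pdx_eq h₄, hsol.pdt_eq]
  simp only [inner_sub_right, inner_add_right, inner_neg_right, real_inner_smul_right,
    real_inner_self_eq_norm_sq, real_inner_comm (pdx u x t) (u x t)]
  ring

theorem vmkdv_energy_conservation_law (d : ℕ) (hd : 1 ≤ d)
    (u : ℝ → ℝ → EuclideanSpace ℝ (Fin d))
    (hu : ContDiff ℝ ∞ (Function.uncurry u))
    (hsol : IsVmKdV u) :
    ∀ x t : ℝ,
      deriv (fun s => (1 : ℝ) / 2 * ‖pdx u x s‖ ^ 2 - (1 : ℝ) / 8 * ‖u x s‖ ^ 4) t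
        = deriv (fun y =>
            (1 : ℝ) / 8 * ‖u y t‖ ^ 6
              - ‖u y t‖ ^ 2 * ‖pdx u y t‖ ^ 2
              - (1 : ℝ) / 2 * ⟪u y t, pdx u y t⟫_ℝ ^ 2
              - ⟪pdx u y t, pdx (pdx (pdx u)) y t⟫_ℝ
              + (1 : ℝ) / 2 * ‖pdx (pdx u) y t‖ ^ 2
              + (1 : ℝ) / 2 * ‖u y t‖ ^ 2 * ⟪u y t, pdx (pdx u) y t⟫_ℝ) x :=
  vmkdv_energy_conservation_law_general d u hu hsol
end

section
/- Let d ≥ 1, μ ∈ ℝ, c_μ ∈ ℝ, and let E ∈ ℝ^d be a unit vector (‖E‖ = 1). Define ξ_μ(x,t) = μ(x − c_μ) − μ³ t. Then the 1-soliton profile u(x,t) := (2μ / cosh(ξ_μ(x,t))) E is a smooth solution of the vmKdV equation u_t + (3/2)‖u‖² u_x + u_xxx = 0 on all of ℝ × ℝ. -/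
/-!
The soliton is a traveling wave `f (a x + b t + c) • v` with a fixed direction `v`, so the vector
equation reduces to the scalar ODE `b f' + (3/2) ‖v‖² f² (a f') + a³ f''' = 0`. Writing the
soliton as `sech (μ x - μ³ t - μ c) • (2μ E)`, we have `‖v‖² = 4μ²`, and the ODE becomes `μ³`
times the derivative of the profile equation `sech'' = sech - 2 sech³`.
-/

open Real MeasureTheory intervalIntegral InnerProductSpace ContDiff

section TravelingWave

variable {F : Type*} [NormedAddCommGroup F] [NormedSpace ℝ F]

theorem contDiff_travelingWave {n : WithTop ℕ∞} {f : ℝ → ℝ} (hf : ContDiff ℝ n f)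
    (a b c : ℝ) (v : F) :
    ContDiff ℝ n (Function.uncurry fun x t => f (a * x + b * t + c) • v) :=
  (hf.comp (by fun_prop)).smul contDiff_const

theorem pdx_travelingWave {f : ℝ → ℝ} (hf : Differentiable ℝ f) (a b c : ℝ) (v : F) :
    pdx (fun x t => f (a * x + b * t + c) • v)
      = fun x t => deriv f (a * x + b * t + c) • a • v := by
  funext x t
  have hphase : HasDerivAt (fun y => a * y + b * t + c) a x := by
    simpa using ((hasDerivAt_id x).const_mul a).add_const (b * t + c)
  rw [smul_smul, ← (((hf _).hasDerivAt.comp x hphase).smul_const v).deriv]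
  rfl

theorem pdt_travelingWave {f : ℝ → ℝ} (hf : Differentiable ℝ f) (a b c : ℝ) (v : F) :
    pdt (fun x t => f (a * x + b * t + c) • v)
      = fun x t => deriv f (a * x + b * t + c) • b • v := by
  funext x t
  have hphase : HasDerivAt (fun s => a * x + b * s + c) b t := by
    simpa using (((hasDerivAt_id t).const_mul b).const_add (a * x)).add_const c
  rw [smul_smul, ← (((hf _).hasDerivAt.comp t hphase).smul_const v).deriv]
  rfl

theorem isVmKdV_travelingWave {d : ℕ} {f : ℝ → ℝ} (hf : ContDiff ℝ 3 f) {a b : ℝ} (c : ℝ)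
    (v : EuclideanSpace ℝ (Fin d))
    (hode : ∀ s, b * deriv f s + 3 / 2 * ‖v‖ ^ 2 * f s ^ 2 * (a * deriv f s)
      + a ^ 3 * deriv^[3] f s = 0) :
    IsVmKdV fun x t => f (a * x + b * t + c) • v := by
  have hf₁ : Differentiable ℝ f := hf.differentiable (by norm_num)
  have hf₂ : Differentiable ℝ (deriv f) := (hf.of_le (by norm_num)).differentiable_deriv_two
  have hf₃ : Differentiable ℝ (deriv (deriv f)) := hf.deriv'.differentiable_deriv_two
  intro x t
  rw [pdt_travelingWave hf₁, pdx_travelingWave hf₁,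
    pdx_travelingWave hf₂, pdx_travelingWave hf₃]
  simp only [norm_smul, Real.norm_eq_abs, mul_pow, sq_abs, smul_smul, ← add_smul]
  have hs := hode (a * x + b * t + c)
  simp only [Function.iterate_succ_apply', Function.iterate_zero_apply] at hs
  rw [← zero_smul ℝ v]
  congr 1
  linear_combination hs

end TravelingWave

theorem hasDerivAt_inv_cosh (s : ℝ) :
    HasDerivAt (fun s => (cosh s)⁻¹) (-sinh s / cosh s ^ 2) s :=
  (hasDerivAt_cosh s).inv (cosh_pos s).ne'

theorem contDiff_inv_cosh {n : WithTop ℕ∞} : ContDiff ℝ n fun s => (cosh s)⁻¹ :=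
  contDiff_cosh.inv fun s => (cosh_pos s).ne'

theorem deriv_inv_cosh : deriv (fun s => (cosh s)⁻¹) = fun s => -sinh s / cosh s ^ 2 :=
  funext fun s => (hasDerivAt_inv_cosh s).deriv

theorem deriv_deriv_inv_cosh :
    deriv (deriv fun s => (cosh s)⁻¹) = fun s => (cosh s)⁻¹ - 2 * (cosh s)⁻¹ ^ 3 := by
  funext s
  have hc : cosh s ≠ 0 := (cosh_pos s).ne'
  have hψ' : HasDerivAt (fun s => -sinh s / cosh s ^ 2)
      ((-cosh s * cosh s ^ 2 - -sinh s * (2 * cosh s ^ 1 * sinh s)) / (cosh s ^ 2) ^ 2) s :=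
    (hasDerivAt_sinh s).neg.div ((hasDerivAt_cosh s).pow 2) (pow_ne_zero 2 hc)
  rw [deriv_inv_cosh, hψ'.deriv]
  field_simp
  linear_combination -2 * cosh_sq_sub_sinh_sq s

theorem iterate_deriv_three_inv_cosh (s : ℝ) :
    deriv^[3] (fun s => (cosh s)⁻¹) s
      = deriv (fun s => (cosh s)⁻¹) s - 6 * (cosh s)⁻¹ ^ 2 * deriv (fun s => (cosh s)⁻¹) s := by
  have hψ := hasDerivAt_inv_cosh s
  simp only [Function.iterate_succ_apply', Function.iterate_zero_apply, deriv_deriv_inv_cosh]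
  have hψ₂ : HasDerivAt (fun s => (cosh s)⁻¹ - 2 * (cosh s)⁻¹ ^ 3)
      (-sinh s / cosh s ^ 2 - 2 * (3 * (cosh s)⁻¹ ^ 2 * (-sinh s / cosh s ^ 2))) s :=
    hψ.sub ((hψ.pow 3).const_mul 2)
  rw [hψ₂.deriv, hψ.deriv]
  ring

theorem vmkdv_one_soliton_general (d : ℕ) (μ cμ : ℝ)
    (E : EuclideanSpace ℝ (Fin d)) (hE : ‖E‖ = 1) :
    ContDiff ℝ ∞
        (Function.uncurry fun x t =>
          (2 * μ / Real.cosh (μ * (x - cμ) - μ ^ 3 * t)) • E)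
      ∧ IsVmKdV fun x t =>
          (2 * μ / Real.cosh (μ * (x - cμ) - μ ^ 3 * t)) • E := by
  have hu : (fun x t => (2 * μ / Real.cosh (μ * (x - cμ) - μ ^ 3 * t)) • E)
      = fun x t => (cosh (μ * x + -μ ^ 3 * t + -(μ * cμ)))⁻¹ • (2 * μ) • E := by
    funext x t
    rw [smul_smul, div_eq_inv_mul]
    ring_nf
  have hnorm : ‖(2 * μ) • E‖ ^ 2 = 4 * μ ^ 2 := by
    rw [norm_smul, hE, mul_one, Real.norm_eq_abs, sq_abs]
    ring
  rw [hu]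
  refine ⟨contDiff_travelingWave contDiff_inv_cosh _ _ _ _,
    isVmKdV_travelingWave (f := fun s => (cosh s)⁻¹) contDiff_inv_cosh _ _
      fun s => ?_⟩
  rw [hnorm, iterate_deriv_three_inv_cosh]
  ring

theorem vmkdv_one_soliton (d : ℕ) (hd : 1 ≤ d) (μ cμ : ℝ)
    (E : EuclideanSpace ℝ (Fin d)) (hE : ‖E‖ = 1) :
    ContDiff ℝ ∞
        (Function.uncurry fun x t =>
          (2 * μ / Real.cosh (μ * (x - cμ) - μ ^ 3 * t)) • E)
      ∧ IsVmKdV fun x t =>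
          (2 * μ / Real.cosh (μ * (x - cμ) - μ ^ 3 * t)) • E :=
  vmkdv_one_soliton_general d μ cμ E hE
end

section
/- Let E₁, E₂ ∈ ℝ² be unit vectors, let μ, ν ∈ ℝ with μ ≠ ν and μ ≠ −ν, and let c_μ, c_ν ∈ ℝ. Define ξ_μ(x,t) = μ(x − c_μ) − μ³t and ξ_ν(x,t) = ν(x − c_ν) − ν³t, F_{μ,ν} = 2(ν² − μ²) ν cosh(ξ_μ), F_{ν,μ} = 2(μ² − ν²) μ cosh(ξ_ν), and G = (μ² + ν²) cosh(ξ_μ) cosh(ξ_ν) − 2μν sinh(ξ_μ) sinh(ξ_ν) − 2μν (E₁·E₂). Assume G(x,t) ≠ 0 for all (x,t) ∈ ℝ × ℝ. Then the 2-soliton profile u(x,t) := (F_{μ,ν}(x,t)/G(x,t)) E₁ + (F_{ν,μ}(x,t)/G(x,t)) E₂ is a smooth solution of the vmKdV equation u_t + (3/2)‖u‖² u_x + u_xxx = 0 on all of ℝ × ℝ. -/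
/-!
Hirota's bilinear method. Multiplying `G` and `(F_{μ,ν}, F_{ν,μ})` by `4 e^{ξ_μ + ξ_ν}` gives a
scalar τ-function `f` and a vector τ-function `g` that are polynomials in `e^{ξ_μ}` and `e^{ξ_ν}`,
with `u = g / f`. For any smooth `f ≠ 0` and `g`,
  `f² (u_t + u_xxx) = (D_t + D_x³) g·f - 3 (D_x² f·f) u_x`,
so `u` solves vmKdV as soon as `(D_t + D_x³) g·f = 0` and `2 D_x² f·f = ‖g‖²`. Each monomial
`e^{n ξ_μ + m ξ_ν}` is a plane wave, on which `∂_x` and `∂_t` act by scalars, so both bilinear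
equations reduce to polynomial identities in `e^{ξ_μ}` and `e^{ξ_ν}`.
-/

open Real MeasureTheory intervalIntegral InnerProductSpace ContDiff

open Function

section Partials

variable {E : Type*} [NormedAddCommGroup E] [NormedSpace ℝ E]

theorem pdx_iterate (n : ℕ) (u : ℝ → ℝ → E) (x t : ℝ) :
    (pdx^[n] u) x t = iteratedDeriv n (fun y => u y t) x := by
  induction n generalizing u with
  | zero => simp
  | succ n ih => rw [iterate_succ_apply, ih, iteratedDeriv_succ']; rfl

theorem ContDiff.uncurry_left {u : ℝ → ℝ → E} {n : ℕ∞ω} (x : ℝ) (hu : ContDiff ℝ n (uncurry u)) :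
    ContDiff ℝ n (u x) :=
  hu.comp (contDiff_const.prodMk contDiff_id)

theorem ContDiff.uncurry_right {u : ℝ → ℝ → E} {n : ℕ∞ω} (t : ℝ) (hu : ContDiff ℝ n (uncurry u)) :
    ContDiff ℝ n fun y => u y t :=
  hu.comp (contDiff_id.prodMk contDiff_const)

theorem pdx_iterate_smul {f : ℝ → ℝ → ℝ} {u : ℝ → ℝ → E} (hf : ContDiff ℝ ∞ (uncurry f))
    (hu : ContDiff ℝ ∞ (uncurry u)) (n : ℕ) (x t : ℝ) :
    (pdx^[n] fun x t => f x t • u x t) x t =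
      ∑ i ∈ Finset.range (n + 1), n.choose i • (pdx^[i] f) x t • (pdx^[n - i] u) x t := by
  simp only [pdx_iterate, ← iteratedDerivWithin_univ]
  exact iteratedDerivWithin_smul (Set.mem_univ x) uniqueDiffOn_univ
    ((hf.uncurry_right t).of_le (WithTop.coe_le_coe.2 le_top)).contDiffWithinAt
    ((hu.uncurry_right t).of_le (WithTop.coe_le_coe.2 le_top)).contDiffWithinAt

theorem pdt_smul {f : ℝ → ℝ → ℝ} {u : ℝ → ℝ → E} (hf : ContDiff ℝ ∞ (uncurry f))
    (hu : ContDiff ℝ ∞ (uncurry u)) (x t : ℝ) :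
    pdt (fun x t => f x t • u x t) x t = f x t • pdt u x t + pdt f x t • u x t :=
  (((hf.uncurry_left x).differentiable (by simp) t).hasDerivAt.smul
    ((hu.uncurry_left x).differentiable (by simp) t).hasDerivAt).deriv

end Partials

section Hirota

variable {E : Type*} [NormedAddCommGroup E] [NormedSpace ℝ E]

/-- `(D_t + D_x³) g·f` in Hirota's notation. -/
noncomputable def hirotaDtDx3 (g : ℝ → ℝ → E) (f : ℝ → ℝ → ℝ) : ℝ → ℝ → E := fun x t =>
  f x t • pdt g x t - pdt f x t • g x t + f x t • pdx (pdx (pdx g)) x t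
    - (3 : ℝ) • pdx f x t • pdx (pdx g) x t + (3 : ℝ) • pdx (pdx f) x t • pdx g x t
    - pdx (pdx (pdx f)) x t • g x t

/-- `D_x² f·f` in Hirota's notation. -/
noncomputable def hirotaDx2 (f : ℝ → ℝ → ℝ) : ℝ → ℝ → ℝ := fun x t =>
  2 * (f x t * pdx (pdx f) x t - pdx f x t ^ 2)

theorem isVmKdV_of_hirota {d : ℕ} {f : ℝ → ℝ → ℝ} {g : ℝ → ℝ → EuclideanSpace ℝ (Fin d)}
    (hf : ContDiff ℝ ∞ (uncurry f)) (hg : ContDiff ℝ ∞ (uncurry g)) (hf0 : ∀ x t, f x t ≠ 0)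
    (hdisp : ∀ x t, hirotaDtDx3 g f x t = 0) (hnorm : ∀ x t, 2 * hirotaDx2 f x t = ‖g x t‖ ^ 2) :
    ContDiff ℝ ∞ (uncurry fun x t => (f x t)⁻¹ • g x t) ∧
      IsVmKdV fun x t => (f x t)⁻¹ • g x t := by
  set u := fun x t => (f x t)⁻¹ • g x t
  have hu : ContDiff ℝ ∞ (uncurry u) := (hf.inv fun z => hf0 z.1 z.2).smul hg
  refine ⟨hu, fun x t => ?_⟩
  have hgu : g = fun x t => f x t • u x t := by
    funext x t
    simp [u, smul_smul, hf0 x t]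
  have hgx : g x t = f x t • u x t := by rw [hgu]
  have h1 := pdx_iterate_smul hf hu 1 x t
  have h2 := pdx_iterate_smul hf hu 2 x t
  have h3 := pdx_iterate_smul hf hu 3 x t
  have ht := pdt_smul hf hu x t
  simp only [Finset.sum_range_succ, Finset.sum_range_zero, ← hgu] at h1 h2 h3 ht
  have hB1 := hdisp x t
  have hB2 := hnorm x t
  simp only [hirotaDtDx3, hirotaDx2] at hB1 hB2
  rw [hgx, norm_smul, mul_pow, Real.norm_eq_abs, sq_abs] at hB2
  change pdx g x t = _ at h1
  change pdx (pdx g) x t = _ at h2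
  change pdx (pdx (pdx g)) x t = _ at h3
  rw [h1, h2, h3, ht, hgx] at hB1
  norm_num at hB1
  have hscaled : f x t ^ 2 • (pdt u x t + (3 / 2 * ‖u x t‖ ^ 2) • pdx u x t
      + pdx (pdx (pdx u)) x t) = 0 := by
    linear_combination (norm := module) hB1 - ((3 : ℝ) / 2) • (hB2 • pdx u x t)
  exact (smul_eq_zero.mp hscaled).resolve_left (pow_ne_zero 2 (hf0 x t))

end Hirota

def solitonPhase (k c x t : ℝ) : ℝ := k * (x - c) - k ^ 3 * t

section TwoPhase

variable {ι E : Type*} [Fintype ι] [NormedAddCommGroup E] [NormedSpace ℝ E]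

noncomputable def twoPhaseSum (a : ι → E) (n m : ι → ℕ) (μ ν cμ cν : ℝ) : ℝ → ℝ → E :=
  fun x t => ∑ i, (exp (solitonPhase μ cμ x t) ^ n i * exp (solitonPhase ν cν x t) ^ m i) • a i

theorem exp_solitonPhase_pow_mul_exp_solitonPhase_pow (μ ν cμ cν : ℝ) (n m : ℕ) (x t : ℝ) :
    exp (solitonPhase μ cμ x t) ^ n * exp (solitonPhase ν cν x t) ^ m
      = exp ((n * μ + m * ν) * x - (n * μ ^ 3 + m * ν ^ 3) * t - (n * μ * cμ + m * ν * cν)) := by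
  rw [← exp_nat_mul, ← exp_nat_mul, ← exp_add]
  congr 1
  simp only [solitonPhase]
  ring

theorem pdx_twoPhaseSum (a : ι → E) (n m : ι → ℕ) (μ ν cμ cν : ℝ) :
    pdx (twoPhaseSum a n m μ ν cμ cν)
      = twoPhaseSum (fun i => (n i * μ + m i * ν) • a i) n m μ ν cμ cν := by
  funext x t
  refine HasDerivAt.deriv (HasDerivAt.fun_sum fun i _ => ?_)
  simp only [exp_solitonPhase_pow_mul_exp_solitonPhase_pow, smul_smul]
  refine HasDerivAt.smul_const ?_ (a i)
  have hwave := ((((hasDerivAt_id x).const_mul (n i * μ + m i * ν)).sub_const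
    ((n i * μ ^ 3 + m i * ν ^ 3) * t)).sub_const (n i * μ * cμ + m i * ν * cν)).exp
  exact hwave.congr_deriv (by simp only [id, mul_one])

theorem pdt_twoPhaseSum (a : ι → E) (n m : ι → ℕ) (μ ν cμ cν : ℝ) :
    pdt (twoPhaseSum a n m μ ν cμ cν)
      = twoPhaseSum (fun i => (-(n i * μ ^ 3 + m i * ν ^ 3)) • a i) n m μ ν cμ cν := by
  funext x t
  refine HasDerivAt.deriv (HasDerivAt.fun_sum fun i _ => ?_)
  simp only [exp_solitonPhase_pow_mul_exp_solitonPhase_pow, smul_smul]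
  refine HasDerivAt.smul_const ?_ (a i)
  have hwave := ((((hasDerivAt_id t).const_mul (n i * μ ^ 3 + m i * ν ^ 3)).const_sub
    ((n i * μ + m i * ν) * x)).sub_const (n i * μ * cμ + m i * ν * cν)).exp
  exact hwave.congr_deriv (by simp only [id, mul_one])

theorem contDiff_twoPhaseSum (a : ι → E) (n m : ι → ℕ) (μ ν cμ cν : ℝ) :
    ContDiff ℝ ∞ (uncurry (twoPhaseSum a n m μ ν cμ cν)) := by
  unfold twoPhaseSum solitonPhase
  fun_prop

end TwoPhase

section TwoSoliton

variable {E : Type*} [NormedAddCommGroup E] [InnerProductSpace ℝ E]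

noncomputable def twoSolitonTau (μ ν cμ cν e : ℝ) : ℝ → ℝ → ℝ :=
  twoPhaseSum ![(μ - ν) ^ 2, (μ - ν) ^ 2, (μ + ν) ^ 2, (μ + ν) ^ 2, -8 * μ * ν * e]
    ![2, 0, 2, 0, 1] ![2, 0, 0, 2, 1] μ ν cμ cν

noncomputable def twoSolitonNumerator (E₁ E₂ : E) (μ ν cμ cν : ℝ) : ℝ → ℝ → E :=
  twoPhaseSum ![(4 * (ν ^ 2 - μ ^ 2) * ν) • E₁, (4 * (ν ^ 2 - μ ^ 2) * ν) • E₁,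
      (4 * (μ ^ 2 - ν ^ 2) * μ) • E₂, (4 * (μ ^ 2 - ν ^ 2) * μ) • E₂]
    ![2, 0, 1, 1] ![1, 1, 2, 0] μ ν cμ cν

theorem twoSolitonTau_apply (μ ν cμ cν e x t : ℝ) :
    twoSolitonTau μ ν cμ cν e x t = 4 * exp (solitonPhase μ cμ x t) * exp (solitonPhase ν cν x t) *
      ((μ ^ 2 + ν ^ 2) * cosh (solitonPhase μ cμ x t) * cosh (solitonPhase ν cν x t)
        - 2 * μ * ν * sinh (solitonPhase μ cμ x t) * sinh (solitonPhase ν cν x t)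
        - 2 * μ * ν * e) := by
  simp only [twoSolitonTau, twoPhaseSum, Fin.sum_univ_succ, Fin.sum_univ_zero,
    Matrix.cons_val_zero, Matrix.cons_val_succ, smul_eq_mul, cosh_eq, sinh_eq, exp_neg]
  field_simp
  ring

theorem twoSolitonNumerator_apply (E₁ E₂ : E) (μ ν cμ cν x t : ℝ) :
    twoSolitonNumerator E₁ E₂ μ ν cμ cν x t =
      (4 * (ν ^ 2 - μ ^ 2) * ν * (exp (solitonPhase μ cμ x t) ^ 2 + 1)
          * exp (solitonPhase ν cν x t)) • E₁ +
      (4 * (μ ^ 2 - ν ^ 2) * μ * exp (solitonPhase μ cμ x t)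
          * (exp (solitonPhase ν cν x t) ^ 2 + 1)) • E₂ := by
  simp only [twoSolitonNumerator, twoPhaseSum, Fin.sum_univ_succ, Fin.sum_univ_zero,
    Matrix.cons_val_zero, Matrix.cons_val_succ]
  module

theorem hirotaDtDx3_twoSoliton (E₁ E₂ : E) (μ ν cμ cν e x t : ℝ) :
    hirotaDtDx3 (twoSolitonNumerator E₁ E₂ μ ν cμ cν) (twoSolitonTau μ ν cμ cν e) x t = 0 := by
  simp only [hirotaDtDx3, twoSolitonTau, twoSolitonNumerator, pdx_twoPhaseSum, pdt_twoPhaseSum]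
  simp only [twoPhaseSum, Fin.sum_univ_succ, Fin.sum_univ_zero, Matrix.cons_val_zero,
    Matrix.cons_val_succ, Nat.cast_ofNat, Nat.cast_zero, Nat.cast_one, smul_eq_mul]
  generalize exp (solitonPhase μ cμ x t) = P
  generalize exp (solitonPhase ν cν x t) = Q
  match_scalars <;> ring

theorem norm_smul_add_smul_sq {E₁ E₂ : E} (hE₁ : ‖E₁‖ = 1) (hE₂ : ‖E₂‖ = 1) (a b : ℝ) :
    ‖a • E₁ + b • E₂‖ ^ 2 = a ^ 2 + b ^ 2 + 2 * a * b * ⟪E₁, E₂⟫_ℝ := by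
  rw [norm_add_sq_real, norm_smul, norm_smul, real_inner_smul_left, real_inner_smul_right,
    hE₁, hE₂]
  simp only [Real.norm_eq_abs, mul_one, sq_abs]
  ring

theorem hirotaDx2_twoSoliton {E₁ E₂ : E} (hE₁ : ‖E₁‖ = 1) (hE₂ : ‖E₂‖ = 1) (μ ν cμ cν x t : ℝ) :
    2 * hirotaDx2 (twoSolitonTau μ ν cμ cν ⟪E₁, E₂⟫_ℝ) x t =
      ‖twoSolitonNumerator E₁ E₂ μ ν cμ cν x t‖ ^ 2 := by
  rw [twoSolitonNumerator_apply, norm_smul_add_smul_sq hE₁ hE₂]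
  simp only [hirotaDx2, twoSolitonTau, pdx_twoPhaseSum]
  simp only [twoPhaseSum, Fin.sum_univ_succ, Fin.sum_univ_zero, Matrix.cons_val_zero,
    Matrix.cons_val_succ, Nat.cast_ofNat, Nat.cast_zero, Nat.cast_one, smul_eq_mul]
  ring

end TwoSoliton

theorem vmkdv_two_soliton_general (E₁ E₂ : EuclideanSpace ℝ (Fin 2))
    (hE₁ : ‖E₁‖ = 1) (hE₂ : ‖E₂‖ = 1)
    (μ ν cμ cν : ℝ)
    (ξμ ξν Fμν Fνμ G : ℝ → ℝ → ℝ)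
    (hξμ : ∀ x t : ℝ, ξμ x t = μ * (x - cμ) - μ ^ 3 * t)
    (hξν : ∀ x t : ℝ, ξν x t = ν * (x - cν) - ν ^ 3 * t)
    (hFμν : ∀ x t : ℝ, Fμν x t = 2 * (ν ^ 2 - μ ^ 2) * ν * Real.cosh (ξμ x t))
    (hFνμ : ∀ x t : ℝ, Fνμ x t = 2 * (μ ^ 2 - ν ^ 2) * μ * Real.cosh (ξν x t))
    (hG : ∀ x t : ℝ,
      G x t = (μ ^ 2 + ν ^ 2) * Real.cosh (ξμ x t) * Real.cosh (ξν x t)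
        - 2 * μ * ν * Real.sinh (ξμ x t) * Real.sinh (ξν x t)
        - 2 * μ * ν * ⟪E₁, E₂⟫_ℝ)
    (hG0 : ∀ x t : ℝ, G x t ≠ 0)
    (u : ℝ → ℝ → EuclideanSpace ℝ (Fin 2))
    (hu : ∀ x t : ℝ, u x t = (Fμν x t / G x t) • E₁ + (Fνμ x t / G x t) • E₂) :
    ContDiff ℝ ∞ (Function.uncurry u) ∧ IsVmKdV u := by
  have hpμ (x t : ℝ) : ξμ x t = solitonPhase μ cμ x t := hξμ x t
  have hpν (x t : ℝ) : ξν x t = solitonPhase ν cν x t := hξν x t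
  have hτ (x t : ℝ) : twoSolitonTau μ ν cμ cν ⟪E₁, E₂⟫_ℝ x t
      = 4 * exp (ξμ x t) * exp (ξν x t) * G x t := by
    rw [twoSolitonTau_apply, hG, hpμ, hpν]
  have hτ0 (x t : ℝ) : twoSolitonTau μ ν cμ cν ⟪E₁, E₂⟫_ℝ x t ≠ 0 := by
    rw [hτ]
    exact mul_ne_zero (by positivity) (hG0 x t)
  have hu_eq : u = fun x t => (twoSolitonTau μ ν cμ cν ⟪E₁, E₂⟫_ℝ x t)⁻¹ •
      twoSolitonNumerator E₁ E₂ μ ν cμ cν x t := by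
    funext x t
    have hP := exp_pos (ξμ x t)
    have hQ := exp_pos (ξν x t)
    rw [hu, twoSolitonNumerator_apply, hτ, hFμν, hFνμ, ← hpμ, ← hpν, cosh_eq, cosh_eq,
      exp_neg, exp_neg]
    match_scalars <;> field_simp
  rw [hu_eq]
  exact isVmKdV_of_hirota (contDiff_twoPhaseSum _ _ _ _ _ _ _)
    (contDiff_twoPhaseSum _ _ _ _ _ _ _) hτ0 (hirotaDtDx3_twoSoliton E₁ E₂ μ ν cμ cν _)
    (hirotaDx2_twoSoliton hE₁ hE₂ μ ν cμ cν)

theorem vmkdv_two_soliton (E₁ E₂ : EuclideanSpace ℝ (Fin 2))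
    (hE₁ : ‖E₁‖ = 1) (hE₂ : ‖E₂‖ = 1)
    (μ ν cμ cν : ℝ) (hμν : μ ≠ ν) (hμν' : μ ≠ -ν)
    (ξμ ξν Fμν Fνμ G : ℝ → ℝ → ℝ)
    (hξμ : ∀ x t : ℝ, ξμ x t = μ * (x - cμ) - μ ^ 3 * t)
    (hξν : ∀ x t : ℝ, ξν x t = ν * (x - cν) - ν ^ 3 * t)
    (hFμν : ∀ x t : ℝ, Fμν x t = 2 * (ν ^ 2 - μ ^ 2) * ν * Real.cosh (ξμ x t))
    (hFνμ : ∀ x t : ℝ, Fνμ x t = 2 * (μ ^ 2 - ν ^ 2) * μ * Real.cosh (ξν x t))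
    (hG : ∀ x t : ℝ,
      G x t = (μ ^ 2 + ν ^ 2) * Real.cosh (ξμ x t) * Real.cosh (ξν x t)
        - 2 * μ * ν * Real.sinh (ξμ x t) * Real.sinh (ξν x t)
        - 2 * μ * ν * ⟪E₁, E₂⟫_ℝ)
    (hG0 : ∀ x t : ℝ, G x t ≠ 0)
    (u : ℝ → ℝ → EuclideanSpace ℝ (Fin 2))
    (hu : ∀ x t : ℝ, u x t = (Fμν x t / G x t) • E₁ + (Fνμ x t / G x t) • E₂) :
    ContDiff ℝ ∞ (Function.uncurry u) ∧ IsVmKdV u :=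
  vmkdv_two_soliton_general E₁ E₂ hE₁ hE₂ μ ν cμ cν ξμ ξν Fμν Fνμ G hξμ hξν hFμν hFνμ hG hG0 u hu
end
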